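/- Let A, E be N×n real matrices, A of rank r with column space U and row space V, and let ũ₁, ṽ₁ be unit top singular vectors of A+E with singular value σ̃₁ > 0 (so (A+E)ṽ₁ = σ̃₁ũ₁ and (A+E)ᵀũ₁ = σ̃₁ṽ₁). Then |ũ₁ᵀ E ṽ₁| ≤ ‖E‖³/σ̃₁² + 2‖E‖²/σ̃₁ + ‖P_U E P_V‖, where P_U, P_V are the orthogonal projections onto U and V. -/

import Mathlib

open scoped Matrix.Norms.L2Operator
open scoped Matrix
open scoped RealInnerProductSpace

private lemma perp_norm_le' {E' : Type*} [NormedAddCommGroup E'] [InnerProductSpace ℝ E']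
    (K : Submodule ℝ E') [K.HasOrthogonalProjection] (w : E') :
    ‖w - (K.orthogonalProjectionOnto w : E')‖ ≤ ‖w‖ := by
  have hadd := K.starProjection_add_starProjection_orthogonal w
  have h2 : w - (K.orthogonalProjectionOnto w : E') = (Kᗮ.orthogonalProjectionOnto w : E') :=
    (eq_sub_of_add_eq' hadd).symm
  rw [h2]
  have h := Submodule.norm_sq_eq_add_norm_sq_projection w K
  simp only [Submodule.coe_norm] at h
  nlinarith [norm_nonneg w, norm_nonneg ((Kᗮ.orthogonalProjectionOnto w : E')),
    norm_nonneg ((K.orthogonalProjectionOnto w : E'))]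

private lemma proj_norm_le' {E' : Type*} [NormedAddCommGroup E'] [InnerProductSpace ℝ E']
    (K : Submodule ℝ E') [K.HasOrthogonalProjection] (w : E') :
    ‖(K.orthogonalProjectionOnto w : E')‖ ≤ ‖w‖ := by
  have h := Submodule.norm_sq_eq_add_norm_sq_projection w K
  simp only [Submodule.coe_norm] at h
  nlinarith [norm_nonneg w, norm_nonneg ((Kᗮ.orthogonalProjectionOnto w : E')),
    norm_nonneg ((K.orthogonalProjectionOnto w : E'))]

private lemma funorm {m k : ℕ} (M : Matrix (Fin m) (Fin k) ℝ) (x : EuclideanSpace ℝ (Fin k)) :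
    ‖Matrix.toEuclideanLin M x‖ ≤ ‖M‖ * ‖x‖ := by
  rw [Matrix.l2_opNorm_def]
  exact ((Matrix.toEuclideanLin.trans LinearMap.toContinuousLinearMap) M).le_opNorm x

set_option maxHeartbeats 1000000 in
/-- Let `A` have column space `U` and row space `V`, and let `ũ₁, ṽ₁` be unit
top singular vectors of `A + E` with singular value `σ̃₁ > 0`.  Then
`|ũ₁ᵀ E ṽ₁| ≤ ‖E‖³/σ̃₁² + 2‖E‖²/σ̃₁ + ‖P_U E P_V‖`, with `‖·‖` the
`ℓ²`-operator norm and `P_U, P_V` the orthogonal projections onto `U, V`. -/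
theorem bilinear_top_singular_decomposition (N n r : ℕ)
    (A E : Matrix (Fin N) (Fin n) ℝ) (hrank : A.rank = r)
    (U : Submodule ℝ (EuclideanSpace ℝ (Fin N)))
    (hU : U = LinearMap.range (Matrix.toEuclideanLin A))
    (V : Submodule ℝ (EuclideanSpace ℝ (Fin n)))
    (hV : V = LinearMap.range (Matrix.toEuclideanLin Aᵀ))
    (utilde : EuclideanSpace ℝ (Fin N)) (vtilde : EuclideanSpace ℝ (Fin n))
    (hu : ‖utilde‖ = 1) (hv : ‖vtilde‖ = 1)
    (σt : ℝ) (hσ : 0 < σt)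
    (hsing₁ : Matrix.toEuclideanLin (A + E) vtilde = σt • utilde)
    (hsing₂ : Matrix.toEuclideanLin (A + E)ᵀ utilde = σt • vtilde) :
    |∑ i, ∑ j, utilde i * E i j * vtilde j| ≤
      ‖E‖ ^ 3 / σt ^ 2 + 2 * ‖E‖ ^ 2 / σt +
        ‖(U.subtypeL ∘L U.orthogonalProjectionOnto) ∘L
            (LinearMap.toContinuousLinearMap (Matrix.toEuclideanLin E)) ∘L
              (V.subtypeL ∘L V.orthogonalProjectionOnto)‖ := by
  classical
  set f := Matrix.toEuclideanLin E with hf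
  set T := (U.subtypeL ∘L U.orthogonalProjectionOnto) ∘L
      (LinearMap.toContinuousLinearMap (Matrix.toEuclideanLin E)) ∘L
        (V.subtypeL ∘L V.orthogonalProjectionOnto) with hT
  set u' : EuclideanSpace ℝ (Fin N) := (U.orthogonalProjectionOnto utilde : EuclideanSpace ℝ (Fin N)) with hu'
  set v' : EuclideanSpace ℝ (Fin n) := (V.orthogonalProjectionOnto vtilde : EuclideanSpace ℝ (Fin n)) with hv'
  have hE0 : (0:ℝ) ≤ ‖E‖ := norm_nonneg E
  -- sum equals inner product
  have hsum : ∑ i, ∑ j, utilde i * E i j * vtilde j = ⟪utilde, f vtilde⟫ := by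
    rw [hf]
    simp [PiLp.inner_apply, Matrix.toEuclideanLin_apply, Matrix.mulVec, dotProduct,
      Finset.mul_sum, mul_assoc]
    exact Finset.sum_congr rfl fun i _ => by
      rw [Finset.sum_mul]; exact Finset.sum_congr rfl fun j _ => by ring
  -- splitting of A + E
  have hadd₁ : Matrix.toEuclideanLin A vtilde + f vtilde = σt • utilde := by
    rw [hf, ← LinearMap.add_apply, ← map_add]; exact hsing₁
  have hadd₂ : Matrix.toEuclideanLin Aᵀ utilde + Matrix.toEuclideanLin Eᵀ utilde
      = σt • vtilde := by
    rw [← LinearMap.add_apply, ← map_add, ← Matrix.transpose_add]; exact hsing₂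
  -- norm of Eᵀ
  have hET : ‖Eᵀ‖ = ‖E‖ := by
    have h1 : Eᴴ = Eᵀ := by ext i j; simp [Matrix.conjTranspose_apply]
    rw [← h1]; exact Matrix.l2_opNorm_conjTranspose E
  -- bound on utilde - u'
  have hkey₁ : σt • (utilde - u') = f vtilde - (U.orthogonalProjectionOnto (f vtilde) : EuclideanSpace ℝ (Fin N)) := by
    have hmem : Matrix.toEuclideanLin A vtilde ∈ U := hU ▸ LinearMap.mem_range_self _ _
    have hPa : (U.orthogonalProjectionOnto (Matrix.toEuclideanLin A vtilde) : EuclideanSpace ℝ (Fin N))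
        = Matrix.toEuclideanLin A vtilde := Submodule.starProjection_eq_self_iff.mpr hmem
    have : σt • u' = (U.orthogonalProjectionOnto (σt • utilde) : EuclideanSpace ℝ (Fin N)) := by
      rw [hu', map_smul]; rfl
    rw [smul_sub, this, ← hadd₁, map_add, Submodule.coe_add, hPa]
    abel
  have hup : ‖utilde - u'‖ ≤ ‖E‖ / σt := by
    have h1 : σt * ‖utilde - u'‖ ≤ ‖E‖ := by
      have : ‖σt • (utilde - u')‖ ≤ ‖f vtilde‖ := hkey₁ ▸ perp_norm_le' U (f vtilde)
      rw [norm_smul, Real.norm_eq_abs, abs_of_pos hσ] at this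
      calc σt * ‖utilde - u'‖ ≤ ‖f vtilde‖ := this
        _ ≤ ‖E‖ * ‖vtilde‖ := funorm E vtilde
        _ = ‖E‖ := by rw [hv, mul_one]
    rw [le_div_iff₀ hσ]
    linarith [h1]
  -- bound on vtilde - v'
  have hkey₂ : σt • (vtilde - v') = Matrix.toEuclideanLin Eᵀ utilde -
      (V.orthogonalProjectionOnto (Matrix.toEuclideanLin Eᵀ utilde) : EuclideanSpace ℝ (Fin n)) := by
    have hmem : Matrix.toEuclideanLin Aᵀ utilde ∈ V := hV ▸ LinearMap.mem_range_self _ _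
    have hPa : (V.orthogonalProjectionOnto (Matrix.toEuclideanLin Aᵀ utilde) : EuclideanSpace ℝ (Fin n))
        = Matrix.toEuclideanLin Aᵀ utilde := Submodule.starProjection_eq_self_iff.mpr hmem
    have : σt • v' = (V.orthogonalProjectionOnto (σt • vtilde) : EuclideanSpace ℝ (Fin n)) := by
      rw [hv', map_smul]; rfl
    rw [smul_sub, this, ← hadd₂, map_add, Submodule.coe_add, hPa]
    abel
  have hvp : ‖vtilde - v'‖ ≤ ‖E‖ / σt := by
    have h1 : σt * ‖vtilde - v'‖ ≤ ‖E‖ := by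
      have : ‖σt • (vtilde - v')‖ ≤ ‖Matrix.toEuclideanLin Eᵀ utilde‖ :=
        hkey₂ ▸ perp_norm_le' V _
      rw [norm_smul, Real.norm_eq_abs, abs_of_pos hσ] at this
      calc σt * ‖vtilde - v'‖ ≤ ‖Matrix.toEuclideanLin Eᵀ utilde‖ := this
        _ ≤ ‖Eᵀ‖ * ‖utilde‖ := funorm Eᵀ utilde
        _ = ‖E‖ := by rw [hu, mul_one, hET]
    rw [le_div_iff₀ hσ]
    linarith [h1]
  have hu'1 : ‖u'‖ ≤ 1 := hu ▸ proj_norm_le' U utilde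
  -- decomposition of the inner product
  have hdecomp : ⟪utilde, f vtilde⟫ =
      ⟪utilde - u', f vtilde⟫ + ⟪u', f (vtilde - v')⟫ + ⟪u', f v'⟫ := by
    rw [map_sub]
    rw [inner_sub_left, inner_sub_right]
    ring
  -- third term equals ⟪utilde, T vtilde⟫
  have hthird : ⟪u', f v'⟫ = ⟪utilde, T vtilde⟫ := by
    have hTv : T vtilde = (U.orthogonalProjectionOnto (f v') : EuclideanSpace ℝ (Fin N)) := rfl
    rw [hTv, hu']; exact Submodule.inner_starProjection_left_eq_right U utilde (f v')
  -- bounds on each term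
  have hb1 : |⟪utilde - u', f vtilde⟫| ≤ (‖E‖ / σt) * ‖E‖ := by
    calc |⟪utilde - u', f vtilde⟫| ≤ ‖utilde - u'‖ * ‖f vtilde‖ := abs_real_inner_le_norm _ _
      _ ≤ (‖E‖ / σt) * ‖E‖ := by
          apply mul_le_mul hup ?_ (norm_nonneg _) (by positivity)
          calc ‖f vtilde‖ ≤ ‖E‖ * ‖vtilde‖ := funorm E vtilde
            _ = ‖E‖ := by rw [hv, mul_one]
  have hb2 : |⟪u', f (vtilde - v')⟫| ≤ ‖E‖ * (‖E‖ / σt) := by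
    calc |⟪u', f (vtilde - v')⟫| ≤ ‖u'‖ * ‖f (vtilde - v')‖ := abs_real_inner_le_norm _ _
      _ ≤ 1 * (‖E‖ * (‖E‖ / σt)) := by
          apply mul_le_mul hu'1 ?_ (norm_nonneg _) zero_le_one
          calc ‖f (vtilde - v')‖ ≤ ‖E‖ * ‖vtilde - v'‖ := funorm E _
            _ ≤ ‖E‖ * (‖E‖ / σt) := by
                apply mul_le_mul_of_nonneg_left hvp hE0
      _ = ‖E‖ * (‖E‖ / σt) := one_mul _
  have hb3 : |⟪utilde, T vtilde⟫| ≤ ‖T‖ := by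
    calc |⟪utilde, T vtilde⟫| ≤ ‖utilde‖ * ‖T vtilde‖ := abs_real_inner_le_norm _ _
      _ ≤ 1 * (‖T‖ * 1) := by
          rw [hu, one_mul, one_mul]; exact hv ▸ T.le_opNorm vtilde
      _ = ‖T‖ := by ring
  -- conclude
  rw [hsum, hdecomp, hthird]
  have habs : |⟪utilde - u', f vtilde⟫ + ⟪u', f (vtilde - v')⟫ + ⟪utilde, T vtilde⟫|
      ≤ (‖E‖ / σt) * ‖E‖ + ‖E‖ * (‖E‖ / σt) + ‖T‖ := by
    calc |⟪utilde - u', f vtilde⟫ + ⟪u', f (vtilde - v')⟫ + ⟪utilde, T vtilde⟫|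
        ≤ |⟪utilde - u', f vtilde⟫ + ⟪u', f (vtilde - v')⟫| + |⟪utilde, T vtilde⟫| := abs_add_le _ _
      _ ≤ |⟪utilde - u', f vtilde⟫| + |⟪u', f (vtilde - v')⟫| + |⟪utilde, T vtilde⟫| := by
          linarith [abs_add_le ⟪utilde - u', f vtilde⟫ ⟪u', f (vtilde - v')⟫]
      _ ≤ (‖E‖ / σt) * ‖E‖ + ‖E‖ * (‖E‖ / σt) + ‖T‖ := by linarith
  refine habs.trans ?_
  have hcube : (0:ℝ) ≤ ‖E‖ ^ 3 / σt ^ 2 := by positivity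
  have : (‖E‖ / σt) * ‖E‖ + ‖E‖ * (‖E‖ / σt) = 2 * ‖E‖ ^ 2 / σt := by
    field_simp; ring
  linarith
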